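/- H¹_z(X) coincides with the space of restrictions to X of even functions in H¹(N): an integrable function f on X belongs to H¹_z(X) if and only if there exists F ∈ H¹(N) with F(−t,x) = F(t,x) for ν-almost every (t,x) ∈ N and F|_X = f. -/

import Mathlib

open MeasureTheory Metric Filter Set

noncomputable section

/-- The parabolic quasi-distance on `ℝ × E`. -/
def pdist {E : Type*} [MetricSpace E] (p q : ℝ × E) : ℝ :=
  max (Real.sqrt |p.1 - q.1|) (dist p.2 q.2)

/-- The open parabolic ball in `N = ℝ × E`. -/
def pball {E : Type*} [MetricSpace E] (c : ℝ × E) (r : ℝ) : Set (ℝ × E) :=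
  {p | pdist p c < r}

/-- The upper half space `X = (0,∞) × E` of `N = ℝ × E`. -/
def Xset (E : Type*) : Set (ℝ × E) := {p | 0 < p.1}

/-- The product measure `ν = Lebesgue ⊗ μ` on `N = ℝ × E`. -/
def pmeas {E : Type*} [MeasurableSpace E] (μ : Measure E) : Measure (ℝ × E) :=
  (volume : Measure ℝ).prod μ

/-- A `(1,2)`-atom on `N`: supported in a parabolic ball `Q`, mean value zero, and
`‖a‖_{L²(ν)} ≤ ν(Q)^{-1/2}`. -/
def IsAtom12 {E : Type*} [MetricSpace E] [MeasurableSpace E]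
    (μ : Measure E) (a : ℝ × E → ℝ) : Prop :=
  ∃ (c : ℝ × E) (r : ℝ), 0 < r ∧ Function.support a ⊆ pball c r ∧
    Integrable a (pmeas μ) ∧ (∫ p, a p ∂(pmeas μ)) = 0 ∧
    eLpNorm a 2 (pmeas μ) ≤ (pmeas μ (pball c r)) ^ (-(1:ℝ)/2)

/-- `f = Σ λ_i a_i` with convergence in `L¹(ρ)`. -/
def HasL1Decomp {E : Type*} [MeasurableSpace E] (ρ : Measure (ℝ × E))
    (f : ℝ × E → ℝ) (lam : ℕ → ℝ) (a : ℕ → ℝ × E → ℝ) : Prop :=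
  Summable (fun i => |lam i|) ∧
  Tendsto (fun k => eLpNorm (fun p => f p - ∑ i ∈ Finset.range k, lam i * a i p) 1 ρ)
    atTop (nhds 0)

/-- Membership in the atomic Hardy space `H¹(N)`. -/
def MemH1 {E : Type*} [MetricSpace E] [MeasurableSpace E]
    (μ : Measure E) (f : ℝ × E → ℝ) : Prop :=
  Integrable f (pmeas μ) ∧
  ∃ (lam : ℕ → ℝ) (a : ℕ → ℝ × E → ℝ), (∀ i, IsAtom12 μ (a i)) ∧
    HasL1Decomp (pmeas μ) f lam a

/-- The `H¹(N)` norm: infimum of `Σ |λ_i|` over all atomic decompositions. -/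
def H1norm {E : Type*} [MetricSpace E] [MeasurableSpace E]
    (μ : Measure E) (f : ℝ × E → ℝ) : ℝ :=
  sInf {c | ∃ (lam : ℕ → ℝ) (a : ℕ → ℝ × E → ℝ), (∀ i, IsAtom12 μ (a i)) ∧
    HasL1Decomp (pmeas μ) f lam a ∧ c = ∑' i, |lam i|}

/-- Membership in `H¹_r(X)`: `f ∈ L¹(X,ν)` is the restriction to `X` of some `F ∈ H¹(N)`. -/
def MemH1r {E : Type*} [MetricSpace E] [MeasurableSpace E]
    (μ : Measure E) (f : ℝ × E → ℝ) : Prop :=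
  IntegrableOn f (Xset E) (pmeas μ) ∧
  ∃ F : ℝ × E → ℝ, MemH1 μ F ∧ F =ᵐ[(pmeas μ).restrict (Xset E)] f

/-- The quotient norm on `H¹_r(X)`. -/
def H1rnorm {E : Type*} [MetricSpace E] [MeasurableSpace E]
    (μ : Measure E) (f : ℝ × E → ℝ) : ℝ :=
  sInf {c | ∃ F : ℝ × E → ℝ, MemH1 μ F ∧ F =ᵐ[(pmeas μ).restrict (Xset E)] f ∧
    c = H1norm μ F}

/-- Membership in `H¹_z(X)`: the extension of `f` by zero belongs to `H¹(N)`. -/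
def MemH1z {E : Type*} [MetricSpace E] [MeasurableSpace E]
    (μ : Measure E) (f : ℝ × E → ℝ) : Prop :=
  IntegrableOn f (Xset E) (pmeas μ) ∧ MemH1 μ ((Xset E).indicator f)

/-- The `H¹_z(X)` norm: the `H¹(N)` norm of the zero extension. -/
def H1znorm {E : Type*} [MetricSpace E] [MeasurableSpace E]
    (μ : Measure E) (f : ℝ × E → ℝ) : ℝ :=
  H1norm μ ((Xset E).indicator f)

/-!
The time reflection `σ (t, x) = (-t, x)` preserves `ν` and maps atoms to atoms. If
`1_X f = Σ λᵢ aᵢ`, the even function `1_X f + (1_X f) ∘ σ` is decomposed by interleaving the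
atoms `aᵢ` and `aᵢ ∘ σ`. Conversely, if `F = Σ λᵢ aᵢ` is even, then
`1_X F = 1_X (F + F ∘ σ) / 2 = Σ λᵢ bᵢ` with `bᵢ = 1_X (aᵢ + aᵢ ∘ σ) / 2`, and `bᵢ` is again an
atom: the parts in `X` of the balls around `c` and `σ c` lie in the ball around `(|c.1|, c.2)`,
which has the same measure; `∫_X g + ∫_X g ∘ σ = ∫_N g` gives the cancellation; and `‖bᵢ‖₂ ≤ ‖aᵢ‖₂`.
-/

section Interleave

variable {α : Type*}

def interleave (u v : ℕ → α) (n : ℕ) : α :=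
  if Even n then u (n / 2) else v (n / 2)

@[simp]
lemma interleave_two_mul (u v : ℕ → α) (k : ℕ) : interleave u v (2 * k) = u k := by
  simp [interleave]

@[simp]
lemma interleave_two_mul_add_one (u v : ℕ → α) (k : ℕ) : interleave u v (2 * k + 1) = v k := by
  simp [interleave, show (2 * k + 1) / 2 = k by omega]

lemma interleave_mul_interleave {β γ : Type*} [Mul γ] (u v : ℕ → γ) (a b : ℕ → β → γ)
    (n : ℕ) (x : β) :
    interleave u v n * interleave a b n x =
      interleave (fun i => u i * a i x) (fun i => v i * b i x) n := by
  unfold interleave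
  split_ifs <;> rfl

lemma sum_range_interleave {M : Type*} [AddCommMonoid M] (u v : ℕ → M) (k : ℕ) :
    ∑ n ∈ Finset.range k, interleave u v n =
      ∑ i ∈ Finset.range ((k + 1) / 2), u i + ∑ i ∈ Finset.range (k / 2), v i := by
  induction k with
  | zero => simp
  | succ k ih =>
    rw [Finset.sum_range_succ, ih]
    rcases Nat.even_or_odd' k with ⟨m, rfl | rfl⟩
    · rw [interleave_two_mul, show (2 * m + 1) / 2 = m by omega, show 2 * m / 2 = m by omega,
        show (2 * m + 1 + 1) / 2 = m + 1 by omega, Finset.sum_range_succ]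
      abel
    · rw [interleave_two_mul_add_one, show (2 * m + 1 + 1) / 2 = m + 1 by omega,
        show (2 * m + 1) / 2 = m by omega, show (2 * m + 1 + 1 + 1) / 2 = m + 1 by omega]
      simp only [Finset.sum_range_succ]
      abel

lemma summable_abs_interleave {u v : ℕ → ℝ} (hu : Summable fun i => |u i|)
    (hv : Summable fun i => |v i|) : Summable fun n => |interleave u v n| :=
  Summable.even_add_odd (by simpa using hu) (by simpa using hv)

end Interleave

section HasL1Decomp

variable {E : Type*} [MeasurableSpace E] {ρ ρ' : Measure (ℝ × E)} {f g : ℝ × E → ℝ}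
  {lam lam' : ℕ → ℝ} {a b : ℕ → ℝ × E → ℝ}

lemma aestronglyMeasurable_sub_sum_range (hf : AEStronglyMeasurable f ρ)
    (ha : ∀ i, AEStronglyMeasurable (a i) ρ) (k : ℕ) :
    AEStronglyMeasurable (fun p => f p - ∑ i ∈ Finset.range k, lam i * a i p) ρ :=
  hf.sub (Finset.aestronglyMeasurable_fun_sum _ fun i _ => (ha i).const_mul (lam i))

lemma HasL1Decomp.congr_ae (h : HasL1Decomp ρ f lam a) (hfg : f =ᵐ[ρ] g) :
    HasL1Decomp ρ g lam a := by
  refine ⟨h.1, h.2.congr fun k => eLpNorm_congr_ae ?_⟩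
  filter_upwards [hfg] with p hp
  rw [hp]

lemma HasL1Decomp.comp_measurePreserving {σ : ℝ × E → ℝ × E} (h : HasL1Decomp ρ f lam a)
    (hσ : MeasurePreserving σ ρ' ρ) (hf : AEStronglyMeasurable f ρ)
    (ha : ∀ i, AEStronglyMeasurable (a i) ρ) :
    HasL1Decomp ρ' (f ∘ σ) lam (fun i => a i ∘ σ) :=
  ⟨h.1, h.2.congr fun k =>
    (eLpNorm_comp_measurePreserving (aestronglyMeasurable_sub_sum_range hf ha k) hσ).symm⟩

lemma HasL1Decomp.add (hf : HasL1Decomp ρ f lam a) (hg : HasL1Decomp ρ g lam b)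
    (hfm : AEStronglyMeasurable f ρ) (ham : ∀ i, AEStronglyMeasurable (a i) ρ)
    (hgm : AEStronglyMeasurable g ρ) (hbm : ∀ i, AEStronglyMeasurable (b i) ρ) :
    HasL1Decomp ρ (f + g) lam (fun i => a i + b i) := by
  refine ⟨hf.1, tendsto_of_tendsto_of_tendsto_of_le_of_le tendsto_const_nhds
    (by simpa using hf.2.add hg.2) (fun _ => zero_le) fun k => ?_⟩
  have hres : (fun p => (f + g) p - ∑ i ∈ Finset.range k, lam i * (a i + b i) p) =
      (fun p => f p - ∑ i ∈ Finset.range k, lam i * a i p) +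
        fun p => g p - ∑ i ∈ Finset.range k, lam i * b i p := by
    ext p
    simp only [Pi.add_apply, mul_add, Finset.sum_add_distrib]
    ring
  dsimp only
  rw [hres]
  exact eLpNorm_add_le (aestronglyMeasurable_sub_sum_range hfm ham k)
    (aestronglyMeasurable_sub_sum_range hgm hbm k) le_rfl

lemma HasL1Decomp.add_interleave (hf : HasL1Decomp ρ f lam a) (hg : HasL1Decomp ρ g lam' b)
    (hfm : AEStronglyMeasurable f ρ) (ham : ∀ i, AEStronglyMeasurable (a i) ρ)
    (hgm : AEStronglyMeasurable g ρ) (hbm : ∀ i, AEStronglyMeasurable (b i) ρ) :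
    HasL1Decomp ρ (f + g) (interleave lam lam') (interleave a b) := by
  have hhalf : Tendsto (fun k : ℕ => k / 2) atTop atTop := Nat.tendsto_div_const_atTop two_ne_zero
  have hlim := (hf.2.comp (hhalf.comp (tendsto_add_atTop_nat 1))).add (hg.2.comp hhalf)
  rw [add_zero] at hlim
  refine ⟨summable_abs_interleave hf.1 hg.1, tendsto_of_tendsto_of_tendsto_of_le_of_le
    tendsto_const_nhds hlim (fun _ => zero_le) fun k => ?_⟩
  have hres : (fun p => (f + g) p -
      ∑ n ∈ Finset.range k, interleave lam lam' n * interleave a b n p) =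
      (fun p => f p - ∑ i ∈ Finset.range ((k + 1) / 2), lam i * a i p) +
        fun p => g p - ∑ i ∈ Finset.range (k / 2), lam' i * b i p := by
    ext p
    simp only [Pi.add_apply, interleave_mul_interleave, sum_range_interleave]
    ring
  dsimp only [Function.comp_apply]
  rw [hres]
  exact eLpNorm_add_le (aestronglyMeasurable_sub_sum_range hfm ham _)
    (aestronglyMeasurable_sub_sum_range hgm hbm _) le_rfl

lemma HasL1Decomp.const_smul (h : HasL1Decomp ρ f lam a) (c : ℝ) :
    HasL1Decomp ρ (c • f) lam (fun i => c • a i) := by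
  have hres : ∀ k, (fun p => (c • f) p - ∑ i ∈ Finset.range k, lam i * (c • a i) p) =
      c • fun p => f p - ∑ i ∈ Finset.range k, lam i * a i p := fun k => by
    ext p
    simp only [Pi.smul_apply, smul_eq_mul, mul_sub, Finset.mul_sum]
    ring_nf
  refine ⟨h.1, ?_⟩
  simp_rw [hres, eLpNorm_const_smul]
  simpa using ENNReal.Tendsto.const_mul h.2 (Or.inr enorm_ne_top)

lemma HasL1Decomp.indicator (h : HasL1Decomp ρ f lam a) (s : Set (ℝ × E)) :
    HasL1Decomp ρ (s.indicator f) lam (fun i => s.indicator (a i)) := by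
  refine ⟨h.1, tendsto_of_tendsto_of_tendsto_of_le_of_le tendsto_const_nhds h.2
    (fun _ => zero_le) fun k => ?_⟩
  have hres : (fun p => s.indicator f p - ∑ i ∈ Finset.range k, lam i * s.indicator (a i) p) =
      s.indicator fun p => f p - ∑ i ∈ Finset.range k, lam i * a i p := by
    ext p
    by_cases hp : p ∈ s <;> simp [hp]
  dsimp only
  rw [hres]
  exact eLpNorm_indicator_le _

end HasL1Decomp

lemma pdist_abs_fst_le {E : Type*} [MetricSpace E] {p : ℝ × E} (hp : 0 ≤ p.1) (c : ℝ × E) :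
    pdist p (|c.1|, c.2) ≤ pdist p c := by
  refine max_le_max (Real.sqrt_le_sqrt ?_) le_rfl
  have h := abs_abs_sub_abs_le_abs_sub p.1 c.1
  rwa [abs_of_nonneg hp] at h

section TimeReflection

variable {E : Type*} [MeasurableSpace E] {μ : Measure E}

lemma measurableSet_Xset : MeasurableSet (Xset E) :=
  measurable_fst measurableSet_Ioi

def timeReflection (E : Type*) [MeasurableSpace E] : ℝ × E ≃ᵐ ℝ × E :=
  (MeasurableEquiv.neg ℝ).prodCongr (MeasurableEquiv.refl E)

@[simp]
lemma timeReflection_apply (p : ℝ × E) : timeReflection E p = (-p.1, p.2) := rfl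

lemma measurePreserving_timeReflection [SFinite μ] :
    MeasurePreserving (timeReflection E) (pmeas μ) (pmeas μ) :=
  (Measure.measurePreserving_neg volume).prod (MeasurePreserving.id μ)

lemma setIntegral_Xset_add_setIntegral_Xset_comp_timeReflection [SFinite μ]
    {g : ℝ × E → ℝ} (hg : Integrable g (pmeas μ)) :
    ∫ p in Xset E, g p ∂pmeas μ + ∫ p in Xset E, g (timeReflection E p) ∂pmeas μ =
      ∫ p, g p ∂pmeas μ := by
  have hpre : timeReflection E ⁻¹' (Prod.fst ⁻¹' Set.Iio 0) = Xset E := by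
    ext p
    simp [Xset]
  have hneg : ∫ p in Xset E, g (timeReflection E p) ∂pmeas μ =
      ∫ p in Prod.fst ⁻¹' Set.Iio 0, g p ∂pmeas μ := by
    rw [← hpre, measurePreserving_timeReflection.setIntegral_preimage_emb
      (timeReflection E).measurableEmbedding]
  have hcompl : (Xset E)ᶜ = Prod.fst ⁻¹' Set.Iic 0 := by
    ext p
    simp [Xset]
  -- `{t < 0}` and `Xᶜ = {t ≤ 0}` differ by the null set `{t = 0}`.
  have hae : (Prod.fst ⁻¹' Set.Iio 0 : Set (ℝ × E)) =ᵐ[pmeas μ] Prod.fst ⁻¹' Set.Iic 0 :=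
    Measure.quasiMeasurePreserving_fst.preimage_ae_eq Iio_ae_eq_Iic
  rw [hneg, setIntegral_congr_set hae, ← hcompl, integral_add_compl measurableSet_Xset hg]

end TimeReflection

section Atoms

variable {E : Type*} [MetricSpace E] [MeasurableSpace E] {μ : Measure E} {a : ℝ × E → ℝ}

lemma IsAtom12.integrable (ha : IsAtom12 μ a) : Integrable a (pmeas μ) := by
  obtain ⟨-, -, -, -, h, -⟩ := ha
  exact h

lemma pdist_timeReflection_left (p c : ℝ × E) :
    pdist (timeReflection E p) c = pdist p (timeReflection E c) := by
  simp only [pdist, timeReflection_apply, show -p.1 - c.1 = -(p.1 - -c.1) by ring, abs_neg]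

lemma preimage_timeReflection_pball (c : ℝ × E) (r : ℝ) :
    timeReflection E ⁻¹' pball c r = pball (timeReflection E c) r := by
  ext p
  change pdist (timeReflection E p) c < r ↔ pdist p (timeReflection E c) < r
  rw [pdist_timeReflection_left]

lemma support_comp_timeReflection_subset {c : ℝ × E} {r : ℝ}
    (h : Function.support a ⊆ pball c r) :
    Function.support (a ∘ timeReflection E) ⊆ pball (timeReflection E c) r := by
  rw [Function.support_comp_eq_preimage, ← preimage_timeReflection_pball]
  exact Set.preimage_mono h

lemma pmeas_pball_timeReflection [SFinite μ] (c : ℝ × E) (r : ℝ) :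
    pmeas μ (pball (timeReflection E c) r) = pmeas μ (pball c r) := by
  rw [← preimage_timeReflection_pball, measurePreserving_timeReflection.measure_preimage_equiv]

lemma Xset_inter_union_pball_subset (c : ℝ × E) (r : ℝ) :
    Xset E ∩ (pball c r ∪ pball (timeReflection E c) r) ⊆ pball (|c.1|, c.2) r := by
  rintro p ⟨hp, hc | hσc⟩
  · exact (pdist_abs_fst_le hp.le c).trans_lt hc
  · have h := (pdist_abs_fst_le hp.le (timeReflection E c)).trans_lt hσc
    simp only [timeReflection_apply, abs_neg] at h
    exact h

lemma pmeas_pball_abs_fst [SFinite μ] (c : ℝ × E) (r : ℝ) :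
    pmeas μ (pball (|c.1|, c.2) r) = pmeas μ (pball c r) := by
  rcases le_or_gt 0 c.1 with hc | hc
  · rw [abs_of_nonneg hc]
  · rw [abs_of_neg hc, ← pmeas_pball_timeReflection c r]
    rfl

lemma IsAtom12.comp_timeReflection [SFinite μ] (ha : IsAtom12 μ a) :
    IsAtom12 μ (a ∘ timeReflection E) := by
  have hσ := measurePreserving_timeReflection (μ := μ)
  obtain ⟨c, r, hr, hsupp, hint, hmean, hL2⟩ := ha
  refine ⟨timeReflection E c, r, hr, ?_, (hσ.integrable_comp hint.1).2 hint, ?_, ?_⟩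
  · exact support_comp_timeReflection_subset hsupp
  · exact (hσ.integral_comp' a).trans hmean
  · rw [eLpNorm_comp_measurePreserving hint.1 hσ, pmeas_pball_timeReflection]
    exact hL2

lemma IsAtom12.indicator_Xset_evenPart [SFinite μ] (ha : IsAtom12 μ a) :
    IsAtom12 μ ((Xset E).indicator ((2⁻¹ : ℝ) • (a + a ∘ timeReflection E))) := by
  have hσ := measurePreserving_timeReflection (μ := μ)
  have haσ := ha.comp_timeReflection.integrable
  obtain ⟨c, r, hr, hsupp, hint, hmean, hL2⟩ := ha
  refine ⟨(|c.1|, c.2), r, hr, ?_, ((hint.add haσ).smul (2⁻¹ : ℝ)).indicator measurableSet_Xset,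
    ?_, ?_⟩
  · rw [Set.support_indicator]
    refine (Set.inter_subset_inter_right _ ?_).trans (Xset_inter_union_pball_subset c r)
    calc Function.support ((2⁻¹ : ℝ) • (a + a ∘ timeReflection E))
        ⊆ Function.support a ∪ Function.support (a ∘ timeReflection E) :=
          (Function.support_const_smul_subset _ _).trans (Function.support_add _ _)
      _ ⊆ pball c r ∪ pball (timeReflection E c) r :=
          Set.union_subset_union hsupp (support_comp_timeReflection_subset hsupp)
  · rw [integral_indicator measurableSet_Xset]
    simp only [Pi.smul_apply, Pi.add_apply, smul_eq_mul]
    rw [integral_const_mul, integral_add hint.integrableOn haσ.integrableOn]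
    simp only [Function.comp_apply]
    rw [setIntegral_Xset_add_setIntegral_Xset_comp_timeReflection hint, hmean, mul_zero]
  · rw [pmeas_pball_abs_fst]
    calc eLpNorm ((Xset E).indicator ((2⁻¹ : ℝ) • (a + a ∘ timeReflection E))) 2 (pmeas μ)
        ≤ 2⁻¹ * eLpNorm (a + a ∘ timeReflection E) 2 (pmeas μ) := by
          refine (eLpNorm_indicator_le _).trans_eq ?_
          rw [eLpNorm_const_smul]
          simp [← ofReal_norm]
      _ ≤ 2⁻¹ * (eLpNorm a 2 (pmeas μ) + eLpNorm (a ∘ timeReflection E) 2 (pmeas μ)) := by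
          gcongr
          exact eLpNorm_add_le hint.1 haσ.1 one_le_two
      _ = eLpNorm a 2 (pmeas μ) := by
          rw [eLpNorm_comp_measurePreserving hint.1 hσ, ← two_mul, ← mul_assoc,
            ENNReal.inv_mul_cancel two_ne_zero ENNReal.ofNat_ne_top, one_mul]
      _ ≤ _ := hL2

end Atoms

section MemH1

variable {E : Type*} [MetricSpace E] [MeasurableSpace E] {μ : Measure E} {f g : ℝ × E → ℝ}

lemma MemH1.congr_ae (hf : MemH1 μ f) (hfg : f =ᵐ[pmeas μ] g) : MemH1 μ g := by
  obtain ⟨hint, lam, a, ha, hdec⟩ := hf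
  exact ⟨hint.congr hfg, lam, a, ha, hdec.congr_ae hfg⟩

lemma MemH1.add (hf : MemH1 μ f) (hg : MemH1 μ g) : MemH1 μ (f + g) := by
  obtain ⟨hfi, lam, a, ha, hfd⟩ := hf
  obtain ⟨hgi, lam', b, hb, hgd⟩ := hg
  refine ⟨hfi.add hgi, interleave lam lam', interleave a b, fun n => ?_,
    hfd.add_interleave hgd hfi.1 (fun i => (ha i).integrable.1) hgi.1 fun i => (hb i).integrable.1⟩
  unfold interleave
  split_ifs
  exacts [ha _, hb _]

lemma MemH1.comp_timeReflection [SFinite μ] (hf : MemH1 μ f) :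
    MemH1 μ (f ∘ timeReflection E) := by
  have hσ := measurePreserving_timeReflection (μ := μ)
  obtain ⟨hint, lam, a, ha, hdec⟩ := hf
  exact ⟨(hσ.integrable_comp hint.1).2 hint, lam, _, fun i => (ha i).comp_timeReflection,
    hdec.comp_measurePreserving hσ hint.1 fun i => (ha i).integrable.1⟩

lemma MemH1.indicator_Xset_of_even [SFinite μ] (hf : MemH1 μ f)
    (heven : f ∘ timeReflection E =ᵐ[pmeas μ] f) : MemH1 μ ((Xset E).indicator f) := by
  have hσ := measurePreserving_timeReflection (μ := μ)
  obtain ⟨hint, lam, a, ha, hdec⟩ := hf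
  have ham : ∀ i, AEStronglyMeasurable (a i) (pmeas μ) := fun i => (ha i).integrable.1
  have hdecσ := hdec.comp_measurePreserving hσ hint.1 ham
  have hdecEven := ((hdec.add hdecσ hint.1 ham ((hσ.integrable_comp hint.1).2 hint).1
    fun i => (ha i).comp_timeReflection.integrable.1).const_smul (2⁻¹ : ℝ)).indicator (Xset E)
  refine ⟨hint.indicator measurableSet_Xset, lam, _, fun i => (ha i).indicator_Xset_evenPart,
    hdecEven.congr_ae (EventuallyEq.indicator ?_)⟩
  filter_upwards [heven] with p hp
  simp only [Pi.smul_apply, Pi.add_apply, hp, smul_eq_mul]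
  ring

end MemH1

lemma sigmaFinite_of_measure_ball_lt_top {E : Type*} [PseudoMetricSpace E] [MeasurableSpace E]
    {μ : Measure E} (h : ∀ (x : E) (r : ℝ), 0 < r → μ (ball x r) < ⊤) : SigmaFinite μ := by
  rcases isEmpty_or_nonempty E with hE | ⟨⟨x⟩⟩
  · infer_instance
  · refine Measure.sigmaFinite_of_countable (Set.countable_range fun n : ℕ => ball x (n + 1))
      ?_ (by rw [Set.sUnion_range, Metric.iUnion_ball_nat_succ])
    rintro _ ⟨n, rfl⟩
    exact h x _ n.cast_add_one_pos

theorem stmt4_general {E : Type*} [MetricSpace E] [MeasurableSpace E]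
    (μ : Measure E)
    (hvol : ∀ (x : E) (r : ℝ), 0 < r → 0 < μ (ball x r) ∧ μ (ball x r) < ⊤)
    (f : ℝ × E → ℝ) (hf : IntegrableOn f (Xset E) (pmeas μ)) :
    MemH1z μ f ↔
      ∃ F : ℝ × E → ℝ, MemH1 μ F ∧
        (∀ᵐ p ∂(pmeas μ), F (-p.1, p.2) = F p) ∧
        F =ᵐ[(pmeas μ).restrict (Xset E)] f := by
  have : SigmaFinite μ := sigmaFinite_of_measure_ball_lt_top fun x r hr => (hvol x r hr).2
  constructor
  · rintro ⟨-, hg⟩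
    refine ⟨(Xset E).indicator f + (Xset E).indicator f ∘ timeReflection E,
      hg.add hg.comp_timeReflection, ae_of_all _ fun p => by simp [add_comm], ?_⟩
    rw [EventuallyEq, ae_restrict_iff' measurableSet_Xset]
    refine ae_of_all _ fun p hp => ?_
    have hσp : timeReflection E p ∉ Xset E := by
      simpa [Xset] using le_of_lt (show 0 < p.1 from hp)
    change (Xset E).indicator f p + (Xset E).indicator f (timeReflection E p) = f p
    rw [Set.indicator_of_mem hp, Set.indicator_of_notMem hσp, add_zero]
  · rintro ⟨F, hF, heven, hFf⟩
    exact ⟨hf, (hF.indicator_Xset_of_even heven).congr_ae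
      ((ae_eq_restrict_iff_indicator_ae_eq measurableSet_Xset).mp hFf)⟩

/-- `H¹_z(X)` is the space of restrictions to `X` of even functions in `H¹(N)`:
an integrable `f` on `X` belongs to `H¹_z(X)` iff there is `F ∈ H¹(N)` with
`F(−t,x) = F(t,x)` for `ν`-a.e. `(t,x)` and `F|_X = f` (`ν`-a.e. on `X`). -/
theorem stmt4 {E : Type*} [MetricSpace E] [MeasurableSpace E] [BorelSpace E]
    (μ : Measure E) (C_D : ℝ) (hCD : 1 ≤ C_D)
    (hvol : ∀ (x : E) (r : ℝ), 0 < r → 0 < μ (ball x r) ∧ μ (ball x r) < ⊤)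
    (hdoub : ∀ (x : E) (r : ℝ), 0 < r →
      μ (ball x (2 * r)) ≤ ENNReal.ofReal C_D * μ (ball x r))
    (f : ℝ × E → ℝ) (hf : IntegrableOn f (Xset E) (pmeas μ)) :
    MemH1z μ f ↔
      ∃ F : ℝ × E → ℝ, MemH1 μ F ∧
        (∀ᵐ p ∂(pmeas μ), F (-p.1, p.2) = F p) ∧
        F =ᵐ[(pmeas μ).restrict (Xset E)] f :=
  stmt4_general μ hvol f hf
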